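/- Let f ∈ ℚ[z] be a unicritical polynomial of odd degree d ≥ 3 and let α ∈ ℚ be a point that is not strictly post-critical for f. Then FPP(G_∞(ℚ,f,α)) ≥ ∏_{p prime, p | d} (p−2)/(p−1) > 0. -/

import Mathlib

/-!
Common framework: automorphisms of the `d`-adic rooted tree.

Vertices of the `d`-adic rooted tree `T` are finite words over the alphabet `Fin d`
(the root is the empty word `[]`, and the immediate descendants of `v` are the words
`v ++ [i]`).  An automorphism of `T` is a permutation of the vertex set preserving
the length (= level) of words and the prefix (= ancestor) relation.
-/

namespace ArboGal

/-- An automorphism of the `d`-adic rooted tree. -/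
structure TreeAut (d : ℕ) where
  toPerm : Equiv.Perm (List (Fin d))
  length_eq : ∀ v, (toPerm v).length = v.length
  prefix_mono : ∀ v w, v <+: w → toPerm v <+: toPerm w

namespace TreeAut

variable {d : ℕ}

lemma toPerm_injective : Function.Injective (toPerm : TreeAut d → Equiv.Perm (List (Fin d))) := by
  rintro ⟨a, _, _⟩ ⟨b, _, _⟩ h
  simpa using h

lemma symm_length (g : TreeAut d) (v : List (Fin d)) :
    (g.toPerm.symm v).length = v.length := by
  conv_rhs => rw [← Equiv.apply_symm_apply g.toPerm v, g.length_eq]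

lemma symm_prefix (g : TreeAut d) {v w : List (Fin d)} (h : v <+: w) :
    g.toPerm.symm v <+: g.toPerm.symm w := by
  set p := (g.toPerm.symm w).take v.length with hp
  have hpw : p <+: g.toPerm.symm w := List.take_prefix _ _
  have h1 : g.toPerm p <+: w := by
    have h2 := g.prefix_mono _ _ hpw
    rwa [Equiv.apply_symm_apply] at h2
  have hvlen : v.length ≤ w.length := h.length_le
  have hplen : (g.toPerm p).length = v.length := by
    rw [g.length_eq, hp, List.length_take, symm_length]
    omega
  have hgpv : g.toPerm p = v := by
    have e1 := List.prefix_iff_eq_take.mp h1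
    have e2 := List.prefix_iff_eq_take.mp h
    rw [hplen] at e1
    rw [e1, ← e2]
  have hfin : p = g.toPerm.symm v := by
    rw [← hgpv, Equiv.symm_apply_apply]
  rw [← hfin]
  exact hpw

instance : Group (TreeAut d) where
  one := ⟨Equiv.refl _, fun _ => rfl, fun _ _ h => h⟩
  mul g h := ⟨g.toPerm.trans h.toPerm,
    fun v => by simp [Equiv.trans_apply, h.length_eq, g.length_eq],
    fun v w hvw => h.prefix_mono _ _ (g.prefix_mono _ _ hvw)⟩
  inv g := ⟨g.toPerm.symm, g.symm_length, fun _ _ h => g.symm_prefix h⟩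
  mul_assoc a b c := toPerm_injective rfl
  one_mul a := toPerm_injective (Equiv.ext fun _ => rfl)
  mul_one a := toPerm_injective (Equiv.ext fun _ => rfl)
  inv_mul_cancel a := toPerm_injective (Equiv.symm_trans_self a.toPerm)

@[simp] lemma mul_toPerm (g h : TreeAut d) : (g * h).toPerm = g.toPerm.trans h.toPerm := rfl
@[simp] lemma one_toPerm : (1 : TreeAut d).toPerm = Equiv.refl _ := rfl
@[simp] lemma inv_toPerm (g : TreeAut d) : (g⁻¹).toPerm = g.toPerm.symm := rfl

lemma apply_append (g : TreeAut d) (v w : List (Fin d)) :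
    g.toPerm (v ++ w) = g.toPerm v ++ (g.toPerm (v ++ w)).drop v.length := by
  obtain ⟨s, hs⟩ := g.prefix_mono v (v ++ w) (List.prefix_append v w)
  rw [← hs]
  congr 1
  rw [← g.length_eq v]
  exact List.drop_left.symm

/-- The section `g|_v` of `g` at the vertex `v` : the unique automorphism of `T` with
`(v ++ w)^g = v^g ++ w^(g|_v)` for all words `w`. -/
def sect (g : TreeAut d) (v : List (Fin d)) : TreeAut d where
  toPerm :=
    { toFun := fun w => (g.toPerm (v ++ w)).drop v.length
      invFun := fun w => (g.toPerm.symm (g.toPerm v ++ w)).drop v.length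
      left_inv := by
        intro w
        show (g.toPerm.symm (g.toPerm v ++ (g.toPerm (v ++ w)).drop v.length)).drop v.length = w
        rw [← apply_append g v w, Equiv.symm_apply_apply, List.drop_left]
      right_inv := by
        intro w
        set u := g.toPerm.symm (g.toPerm v ++ w) with hu
        have hvu : v <+: u := by
          have h2 : g.toPerm.symm (g.toPerm v) <+: u := g.symm_prefix (List.prefix_append _ _)
          rwa [Equiv.symm_apply_apply] at h2
        have hrecon : v ++ u.drop v.length = u := by
          obtain ⟨s, hs⟩ := hvu
          rw [← hs, List.drop_left]
        show (g.toPerm (v ++ u.drop v.length)).drop v.length = w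
        rw [hrecon, hu, Equiv.apply_symm_apply, ← g.length_eq v, List.drop_left] }
  length_eq := fun w => by
    show ((g.toPerm (v ++ w)).drop v.length).length = w.length
    rw [List.length_drop, g.length_eq, List.length_append]
    omega
  prefix_mono := by
    intro w₁ w₂ h
    have h2 : g.toPerm (v ++ w₁) <+: g.toPerm (v ++ w₂) := by
      apply g.prefix_mono
      obtain ⟨s, rfl⟩ := h
      rw [← List.append_assoc]
      exact List.prefix_append _ _
    show (g.toPerm (v ++ w₁)).drop v.length <+: (g.toPerm (v ++ w₂)).drop v.length
    rw [apply_append g v w₁, apply_append g v w₂] at h2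
    exact (List.prefix_append_right_inj _).mp h2

@[simp] lemma sect_apply (g : TreeAut d) (v w : List (Fin d)) :
    (sect g v).toPerm w = (g.toPerm (v ++ w)).drop v.length := rfl

lemma concat_of_prefix_succ {α : Type*} {l₁ l₂ : List α} (h : l₁ <+: l₂)
    (hl : l₂.length = l₁.length + 1) (x : α) : l₂ = l₁ ++ [l₂.getLastD x] := by
  obtain ⟨s, rfl⟩ := h
  have hs : s.length = 1 := by
    rw [List.length_append] at hl
    omega
  obtain ⟨a, rfl⟩ := List.length_eq_one_iff.mp hs
  rw [List.getLastD_concat]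

lemma apply_child (g : TreeAut d) (v : List (Fin d)) (i : Fin d) :
    g.toPerm (v ++ [i]) = g.toPerm v ++ [(g.toPerm (v ++ [i])).getLastD i] := by
  apply concat_of_prefix_succ (g.prefix_mono v _ (List.prefix_append _ _))
  rw [g.length_eq, g.length_eq, List.length_append, List.length_singleton]

/-- The label `g|_v^1` of `g` at the vertex `v`, i.e. the permutation induced by `g` on the
immediate descendants of `v` (identified with `Fin d`): `(v ++ [i])^g = v^g ++ [(label g v) i]`. -/
def label (g : TreeAut d) (v : List (Fin d)) : Equiv.Perm (Fin d) where
  toFun i := (g.toPerm (v ++ [i])).getLastD i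
  invFun j := (g.toPerm.symm (g.toPerm v ++ [j])).getLastD j
  left_inv := by
    intro i
    show (g.toPerm.symm (g.toPerm v ++ [(g.toPerm (v ++ [i])).getLastD i])).getLastD _ = i
    rw [← apply_child, Equiv.symm_apply_apply, List.getLastD_concat]
  right_inv := by
    intro j
    set u := g.toPerm.symm (g.toPerm v ++ [j]) with hu
    have hvu : v <+: u := by
      have h2 : g.toPerm.symm (g.toPerm v) <+: u := g.symm_prefix (List.prefix_append _ _)
      rwa [Equiv.symm_apply_apply] at h2
    have hlen : u.length = v.length + 1 := by
      rw [hu, symm_length, List.length_append, g.length_eq, List.length_singleton]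
    have h3 : u = v ++ [u.getLastD j] := concat_of_prefix_succ hvu hlen j
    show (g.toPerm (v ++ [u.getLastD j])).getLastD (u.getLastD j) = j
    rw [← h3, hu, Equiv.apply_symm_apply, List.getLastD_concat]

lemma label_apply (g : TreeAut d) (v : List (Fin d)) (i : Fin d) :
    label g v i = (g.toPerm (v ++ [i])).getLastD i := rfl

lemma apply_concat (g : TreeAut d) (v : List (Fin d)) (i : Fin d) :
    g.toPerm (v ++ [i]) = g.toPerm v ++ [label g v i] := apply_child g v i

end TreeAut

open TreeAut

/-! ### Portraits

Every assignment of a permutation of `Fin d` (a "label") to each vertex determines a unique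
automorphism of the `d`-adic tree; this is used to construct explicit automorphisms. -/

/-- Auxiliary function for `ofPortrait`. -/
def pf (c : List (Fin d) → Equiv.Perm (Fin d)) : List (Fin d) → List (Fin d) → List (Fin d)
  | _, [] => []
  | v, i :: w => c v i :: pf c (v ++ [i]) w

/-- Auxiliary inverse function for `ofPortrait`. -/
def pfInv (c : List (Fin d) → Equiv.Perm (Fin d)) : List (Fin d) → List (Fin d) → List (Fin d)
  | _, [] => []
  | v, j :: w => (c v)⁻¹ j :: pfInv c (v ++ [(c v)⁻¹ j]) w

lemma pf_leftInv (c : List (Fin d) → Equiv.Perm (Fin d)) :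
    ∀ (w v : List (Fin d)), pfInv c v (pf c v w) = w := by
  intro w
  induction w with
  | nil => intro v; rfl
  | cons i w ih =>
      intro v
      show (c v)⁻¹ (c v i) :: pfInv c (v ++ [(c v)⁻¹ (c v i)]) (pf c (v ++ [i]) w) = i :: w
      rw [show (c v)⁻¹ (c v i) = i from Equiv.symm_apply_apply _ _, ih]

lemma pf_rightInv (c : List (Fin d) → Equiv.Perm (Fin d)) :
    ∀ (w v : List (Fin d)), pf c v (pfInv c v w) = w := by
  intro w
  induction w with
  | nil => intro v; rfl
  | cons j w ih =>
      intro v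
      show c v ((c v)⁻¹ j) :: pf c (v ++ [(c v)⁻¹ j]) (pfInv c (v ++ [(c v)⁻¹ j]) w) = j :: w
      rw [show c v ((c v)⁻¹ j) = j from Equiv.apply_symm_apply _ _, ih]

lemma pf_length (c : List (Fin d) → Equiv.Perm (Fin d)) :
    ∀ (w v : List (Fin d)), (pf c v w).length = w.length := by
  intro w
  induction w with
  | nil => intro v; rfl
  | cons i w ih =>
      intro v
      show (c v i :: pf c (v ++ [i]) w).length = w.length + 1
      rw [List.length_cons, ih]

lemma pf_append (c : List (Fin d) → Equiv.Perm (Fin d)) :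
    ∀ (a b v : List (Fin d)), pf c v (a ++ b) = pf c v a ++ pf c (v ++ a) b := by
  intro a
  induction a with
  | nil => intro b v; simp [pf]
  | cons i a ih =>
      intro b v
      show c v i :: pf c (v ++ [i]) (a ++ b) = (c v i :: pf c (v ++ [i]) a) ++ pf c (v ++ i :: a) b
      rw [ih, List.cons_append, ← List.append_cons]

/-- The automorphism of the `d`-adic tree whose label at each vertex `v` is `c v`. -/
def ofPortrait (c : List (Fin d) → Equiv.Perm (Fin d)) : TreeAut d where
  toPerm := ⟨pf c [], pfInv c [], fun w => pf_leftInv c w [], fun w => pf_rightInv c w []⟩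
  length_eq := fun v => pf_length c v []
  prefix_mono := by
    intro v w h
    obtain ⟨s, rfl⟩ := h
    change pf c [] v <+: pf c [] (v ++ s)
    rw [pf_append]
    exact ⟨pf c ([] ++ v) s, rfl⟩

lemma ofPortrait_label (c : List (Fin d) → Equiv.Perm (Fin d)) (v : List (Fin d)) :
    label (ofPortrait c) v = c v := by
  apply Equiv.ext
  intro i
  show ((ofPortrait c).toPerm (v ++ [i])).getLastD i = (c v) i
  have h1 : (ofPortrait c).toPerm (v ++ [i]) = pf c [] (v ++ [i]) := rfl
  rw [h1, pf_append]
  have h2 : pf c ([] ++ v) [i] = [c v i] := by simp [pf]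
  rw [h2, List.getLastD_concat]


open TreeAut

section Predicates

variable {d : ℕ}

/-- A set of tree automorphisms is *self-similar* if it is closed under taking sections. -/
def SelfSimilarS (S : Set (TreeAut d)) : Prop :=
  ∀ g ∈ S, ∀ v : List (Fin d), sect g v ∈ S

/-- A set of tree automorphisms is *level-transitive* if it acts transitively on each
level of the tree. -/
def LevelTrans (S : Set (TreeAut d)) : Prop :=
  ∀ v w : List (Fin d), v.length = w.length → ∃ g ∈ S, g.toPerm v = w

/-- `φ_v(st_S(v))`: the set of sections at `v` of the elements of `S` stabilizing `v`. -/
def vertexSections (S : Set (TreeAut d)) (v : List (Fin d)) : Set (TreeAut d) :=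
  {x | ∃ g ∈ S, g.toPerm v = v ∧ sect g v = x}

/-- A set of tree automorphisms is *fractal* if it is self-similar, level-transitive and
`φ_v(st_S(v)) = S` for every vertex `v`. -/
def FractalS (S : Set (TreeAut d)) : Prop :=
  SelfSimilarS S ∧ LevelTrans S ∧ ∀ v : List (Fin d), vertexSections S v = S

/-- The intermediate group `G_H = {g ∈ G ∣ (g|_v)(g|_w)⁻¹ ∈ H for all vertices v, w}`. -/
def GHset (G H : Set (TreeAut d)) : Set (TreeAut d) :=
  {g ∈ G | ∀ v w : List (Fin d), sect g v * (sect g w)⁻¹ ∈ H}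

/-- Two automorphisms agree on all vertices of level at most `n`. -/
def agreeUpTo (n : ℕ) (g h : TreeAut d) : Prop :=
  ∀ v : List (Fin d), v.length ≤ n → g.toPerm v = h.toPerm v

/-- A set of tree automorphisms is *closed* (in the congruence = profinite topology of
`Aut T`) if it contains every automorphism that can be approximated up to every level by
elements of the set. -/
def CongrClosedS (S : Set (TreeAut d)) : Prop :=
  ∀ g : TreeAut d, (∀ n : ℕ, ∃ h ∈ S, agreeUpTo n g h) → g ∈ S

/-- The closure of a subgroup of `Aut T` in the congruence (profinite) topology. -/
def congrClosure (Γ : Subgroup (TreeAut d)) : Subgroup (TreeAut d) where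
  carrier := {g | ∀ n : ℕ, ∃ h ∈ Γ, agreeUpTo n g h}
  one_mem' := fun n => ⟨1, Γ.one_mem, fun _ _ => rfl⟩
  mul_mem' := by
    intro a b ha hb n
    obtain ⟨x, hx, hax⟩ := ha n
    obtain ⟨y, hy, hby⟩ := hb n
    refine ⟨x * y, Γ.mul_mem hx hy, fun v hv => ?_⟩
    show b.toPerm (a.toPerm v) = y.toPerm (x.toPerm v)
    rw [hax v hv]
    exact hby _ (by rw [x.length_eq]; exact hv)
  inv_mem' := by
    intro a ha n
    obtain ⟨x, hx, hax⟩ := ha n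
    refine ⟨x⁻¹, Γ.inv_mem hx, fun v hv => ?_⟩
    show a.toPerm.symm v = x.toPerm.symm v
    apply a.toPerm.injective
    rw [Equiv.apply_symm_apply]
    rw [hax (x.toPerm.symm v) (by rw [x.symm_length]; exact hv)]
    exact (Equiv.apply_symm_apply _ _).symm

/-- The action `π_n(g)` of `g` on the `n`-th level of the tree. -/
def lmap (n : ℕ) (g : TreeAut d) :
    {v : List (Fin d) // v.length = n} → {v : List (Fin d) // v.length = n} :=
  fun v => ⟨g.toPerm v.1, by rw [g.length_eq]; exact v.2⟩

/-- The image `π_n(S)` of a set of tree automorphisms on the `n`-th level of the tree.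
(An automorphism of the truncated tree `T^n` is uniquely determined by its action on the
`n`-th level, so this faithfully encodes the action on `T^n`.) -/
def levelImage (n : ℕ) (S : Set (TreeAut d)) :
    Set ({v : List (Fin d) // v.length = n} → {v : List (Fin d) // v.length = n}) :=
  lmap n '' S

/-- The proportion of elements of `π_n(S)` fixing some vertex at level `n`. -/
noncomputable def fixRatio (S : Set (TreeAut d)) (n : ℕ) : ℝ :=
  (Set.ncard {q ∈ levelImage n S | ∃ v, q v = v} : ℝ) / (Set.ncard (levelImage n S) : ℝ)

/-- The fixed-point proportion
`FPP(S) = lim_n #{g ∈ π_n(S) : g fixes a vertex at level n} / |π_n(S)|`. -/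
noncomputable def FPP (S : Set (TreeAut d)) : ℝ :=
  Filter.limUnder Filter.atTop (fixRatio S)

/-- The fixed-point process: `Xfix n g` is the number of vertices at level `n` fixed by `g`. -/
noncomputable def Xfix (n : ℕ) (g : TreeAut d) : ℕ :=
  Set.ncard {v : List (Fin d) | v.length = n ∧ g.toPerm v = v}

/-- The Hausdorff dimension of a (closed) subgroup of `Aut T`,
`hdim(S) = liminf_n log|π_n(S)| / log|π_n(Aut T)|`. -/
noncomputable def hdim (S : Set (TreeAut d)) : ℝ :=
  Filter.liminf
    (fun n => Real.log (Set.ncard (levelImage n S)) /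
      Real.log (Set.ncard (levelImage n (Set.univ : Set (TreeAut d)))))
    Filter.atTop

/-- The Haar measure (in the ambient closed group `G`) of the closure of a subset `S ⊆ G`:
for a closed subgroup `G ≤ Aut T` with Haar probability measure `μ_G` and a subset `S`
whose defining condition is closed, `μ_G(S) = lim_n |π_n(S)|/|π_n(G)| = inf_n |π_n(S)|/|π_n(G)|`
(the sequence is non-increasing). -/
noncomputable def relDensity (G S : Set (TreeAut d)) : ℝ :=
  ⨅ n : ℕ, (Set.ncard (levelImage n S) : ℝ) / (Set.ncard (levelImage n G) : ℝ)

/-- The rigid vertex stabilizer `rist_S(v)`: elements of `S` fixing every vertex that is not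
a descendant of `v`. -/
def ristS (S : Set (TreeAut d)) (v : List (Fin d)) : Set (TreeAut d) :=
  {g ∈ S | ∀ w : List (Fin d), ¬ v <+: w → g.toPerm w = w}

/-- The rigid level stabilizer `Rist_S(n)`: the product of the rigid vertex stabilizers of the
vertices at level `n`.  (An automorphism belongs to this product iff it fixes all vertices up
to level `n` and, below each vertex `v` of level `n`, it agrees with some element of
`rist_S(v)`.) -/
def RistProd (S : Set (TreeAut d)) (n : ℕ) : Set (TreeAut d) :=
  {g ∈ S | (∀ w : List (Fin d), w.length ≤ n → g.toPerm w = w) ∧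
    ∀ v : List (Fin d), v.length = n → ∃ h ∈ ristS S v, sect h v = sect g v}

/-- `R` has finite index in `S`: finitely many right cosets of `R` cover `S`. -/
def FiniteIndexIn (R S : Set (TreeAut d)) : Prop :=
  ∃ T : Finset (TreeAut d), ∀ g ∈ S, ∃ t ∈ T, ∃ r ∈ R, g = r * t

/-- A set of tree automorphisms is *branch* if it is level-transitive and all its rigid level
stabilizers have finite index in it. -/
def BranchS (S : Set (TreeAut d)) : Prop :=
  LevelTrans S ∧ ∀ n : ℕ, 1 ≤ n → FiniteIndexIn (RistProd S n) S

/-- A closed level-transitive group `S` is of *finite type of depth `D`* if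
`S = {g ∈ Aut T ∣ g|_v^D ∈ π_D(S) for all vertices v}`, where `g|_v^D = π_D(g|_v)` is the
depth-`D` section of `g` at `v`. -/
def FiniteType (S : Set (TreeAut d)) (D : ℕ) : Prop :=
  S = {g : TreeAut d | ∀ v : List (Fin d), lmap D (sect g v) ∈ levelImage D S}

/-- The set of right cosets `{H·g : g ∈ S}` (so its cardinality is the index `|S : H|`
when `H ≤ S` are groups). -/
def rightCosets (H S : Set (TreeAut d)) : Set (Set (TreeAut d)) :=
  {C | ∃ g ∈ S, C = {x | ∃ h ∈ H, x = h * g}}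

/-- The set of cosets `{π_D(H)·π_D(g) : g ∈ S}` of `π_D(H)` in `π_D(S)`. -/
def lvlCosets (D : ℕ) (H S : Set (TreeAut d)) :
    Set (Set ({v : List (Fin d) // v.length = D} → {v : List (Fin d) // v.length = D})) :=
  {C | ∃ g ∈ S, C = {q | ∃ h ∈ H, q = lmap D (h * g)}}

/-- The label of `g` at the root: the action `π_1(g)` of `g` on the first level. -/
def rootLabel (g : TreeAut d) : Equiv.Perm (Fin d) := label g []

/-- The action `π_1(S)` of a set of tree automorphisms on the first level. -/
def rootImage (S : Set (TreeAut d)) : Set (Equiv.Perm (Fin d)) := rootLabel '' S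

/-- The set of cosets of `π_1(H)` in `π_1(S)`, i.e. the quotient `Q = π_1(S)/π_1(H)`. -/
def rootCosets (H S : Set (TreeAut d)) : Set (Set (Equiv.Perm (Fin d))) :=
  {C | ∃ a ∈ rootImage S, C = {x | ∃ b ∈ rootImage H, x = b * a}}

/-- The level-`n` vertex of the end (infinite rooted path) `γ`. -/
def pathPrefix (γ : ℕ → Fin d) (n : ℕ) : List (Fin d) :=
  List.ofFn (fun k : Fin n => γ k)

end Predicates


section LevelMachinery

variable {d : ℕ}

/-- The `n`-th level of the `d`-adic tree. -/
abbrev Lev (d n : ℕ) := {v : List (Fin d) // v.length = n}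

noncomputable instance (n : ℕ) : Fintype (Lev d n) := by
  apply Fintype.ofSurjective (fun f : Fin n → Fin d => (⟨List.ofFn f, List.length_ofFn⟩ : Lev d n))
  rintro ⟨v, hv⟩
  refine ⟨fun i => v.get (Fin.cast hv.symm i), ?_⟩
  apply Subtype.ext
  simp only []
  conv_rhs => rw [← List.ofFn_get v]
  apply List.ext_get (by simp [hv]) (fun i h1 h2 => by simp)

lemma toPerm_nil (g : TreeAut d) : g.toPerm [] = [] :=
  List.length_eq_zero_iff.mp (g.length_eq [])

/-- The permutation induced by a tree automorphism on the `n`-th level. -/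
def permAt (n : ℕ) (g : TreeAut d) : Equiv.Perm (Lev d n) where
  toFun v := ⟨g.toPerm v.1, by rw [g.length_eq]; exact v.2⟩
  invFun v := ⟨g.toPerm.symm v.1, by rw [g.symm_length]; exact v.2⟩
  left_inv v := by apply Subtype.ext; simp
  right_inv v := by apply Subtype.ext; simp

lemma lmap_eq_permAt (n : ℕ) (g : TreeAut d) : lmap n g = ⇑(permAt n g) := rfl

lemma permAt_coe_apply (n : ℕ) (g : TreeAut d) (v : Lev d n) :
    ((permAt n g v : Lev d n) : List (Fin d)) = g.toPerm v.1 := rfl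

lemma permAt_mul (n : ℕ) (g h : TreeAut d) :
    permAt n (g * h) = permAt n h * permAt n g := by
  apply Equiv.ext; intro v; apply Subtype.ext; rfl

lemma permAt_one (n : ℕ) : permAt n (1 : TreeAut d) = 1 := by
  apply Equiv.ext; intro v; apply Subtype.ext; rfl

/-- a prefix of the image is the image of the prefix -/
lemma toPerm_take (g : TreeAut d) (v : List (Fin d)) (m : ℕ) (hm : m ≤ v.length) :
    g.toPerm (v.take m) = (g.toPerm v).take m := by
  have h1 : g.toPerm (v.take m) <+: g.toPerm v := g.prefix_mono _ _ (List.take_prefix m v)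
  have h2 := List.prefix_iff_eq_take.mp h1
  rwa [g.length_eq, List.length_take, Nat.min_eq_left hm] at h2

/-- the action on level `n+1` determines the action on level `n` (for `d ≥ 1`). -/
lemma permAt_eq_of_succ [NeZero d] {n : ℕ} {g h : TreeAut d}
    (H : permAt (n + 1) g = permAt (n + 1) h) : permAt n g = permAt n h := by
  apply Equiv.ext
  rintro ⟨v, hv⟩
  apply Subtype.ext
  have hlen : (v ++ [(0 : Fin d)]).length = n + 1 := by simp [hv]
  have h1 := congrArg (fun p => ((p ⟨v ++ [0], hlen⟩ : Lev d (n+1)) : List (Fin d)))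
    (H : permAt (n+1) g = permAt (n+1) h)
  simp only [permAt_coe_apply] at h1
  show g.toPerm v = h.toPerm v
  have hg : g.toPerm v = (g.toPerm (v ++ [0])).take n := by
    rw [← toPerm_take g _ n (by simp [hv]), List.take_left' hv]
  have hh : h.toPerm v = (h.toPerm (v ++ [0])).take n := by
    rw [← toPerm_take h _ n (by simp [hv]), List.take_left' hv]
  rw [hg, hh, h1]

/-- the action on level `n ≥ 1` determines the label at the root. -/
lemma label_nil_eq_of_permAt_eq {n : ℕ} (hn : 1 ≤ n) {g h : TreeAut d}
    (H : permAt n g = permAt n h) : label g [] = label h [] := by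
  rcases Nat.eq_zero_or_pos d with hd | hd
  · subst hd; apply Equiv.ext; intro i; exact i.elim0
  have : NeZero d := ⟨by omega⟩
  induction n with
  | zero => omega
  | succ m ih =>
    rcases Nat.eq_or_lt_of_le hn with h1 | h1
    · -- n = 1
      apply Equiv.ext; intro i
      have hlen : ([i] : List (Fin d)).length = m + 1 := by
        simp only [List.length_singleton]; exact h1
      have h2 := congrArg (fun p => ((p ⟨[i], hlen⟩ : Lev d (m+1)) : List (Fin d))) H
      simp only [permAt_coe_apply] at h2
      have hg : g.toPerm [i] = [label g [] i] := by
        have := apply_concat g [] i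
        rwa [toPerm_nil, List.nil_append, List.nil_append] at this
      have hh : h.toPerm [i] = [label h [] i] := by
        have := apply_concat h [] i
        rwa [toPerm_nil, List.nil_append, List.nil_append] at this
      rw [hg, hh] at h2
      exact List.singleton_injective h2
    · exact ih (by omega) (permAt_eq_of_succ H)

end LevelMachinery


section GaloisContext

open scoped Polynomial

/-- Abbreviation for the algebraic closure of `ℚ`. -/
abbrev AC : Type := AlgebraicClosure ℚ

/-- Abbreviation for the absolute Galois group of `ℚ`. -/
abbrev GalQ : Type := AC ≃ₐ[ℚ] AC

/-- The data extracted from a unicritical polynomial situation that drives the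
fixed-point argument. -/
structure Ctx (d : ℕ) [NeZero d] where
  hd3 : 3 ≤ d
  ι : List (Fin d) → AC
  ζ : AC
  hζ : IsPrimitiveRoot ζ d
  c₀ : ℚ
  ρ : GalQ → TreeAut d
  hρ : ∀ σ v, ι ((ρ σ).toPerm v) = σ (ι v)
  hinj : ∀ v w, v.length = w.length → ι v = ι w → v = w
  hnc : ∀ (v : List (Fin d)) (i : Fin d), ι (v ++ [i]) ≠ algebraMap ℚ AC c₀
  hdth : ∀ (v : List (Fin d)) (i j : Fin d),
    (ι (v ++ [i]) - algebraMap ℚ AC c₀) ^ d = (ι (v ++ [j]) - algebraMap ℚ AC c₀) ^ d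

namespace Ctx

variable {d : ℕ} [NeZero d] (C : Ctx d)

/-- `ζ` raised to a residue class mod `d`; well-defined. -/
noncomputable def zp (x : ZMod d) : AC := C.ζ ^ x.val

lemma orderOf_zeta : orderOf C.ζ = d := (IsPrimitiveRoot.eq_orderOf C.hζ).symm

lemma zp_injective : Function.Injective C.zp := by
  intro a b h
  exact ZMod.val_injective d (C.hζ.pow_inj (ZMod.val_lt a) (ZMod.val_lt b) h)

lemma zeta_pow_eq_zp (m : ℕ) : C.ζ ^ m = C.zp (m : ZMod d) := by
  unfold zp
  rw [ZMod.val_natCast]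
  conv_lhs => rw [← Nat.mod_add_div m d]
  rw [pow_add, pow_mul, C.hζ.pow_eq_one, one_pow, mul_one]

lemma zp_add (x y : ZMod d) : C.zp (x + y) = C.zp x * C.zp y := by
  have h : C.zp x * C.zp y = C.ζ ^ (x.val + y.val) := by rw [pow_add]; rfl
  rw [h, zeta_pow_eq_zp]
  congr 1
  rw [Nat.cast_add, ZMod.natCast_val, ZMod.natCast_val, ZMod.cast_id, ZMod.cast_id]

lemma zp_mul (x y : ZMod d) : C.zp (x * y) = (C.zp x) ^ y.val := by
  have h : (C.zp x) ^ y.val = C.ζ ^ (x.val * y.val) := by rw [pow_mul]; rfl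
  rw [h, zeta_pow_eq_zp]
  congr 1
  rw [Nat.cast_mul, ZMod.natCast_val, ZMod.natCast_val, ZMod.cast_id, ZMod.cast_id]

lemma zp_ne_zero (x : ZMod d) : C.zp x ≠ 0 := by
  unfold zp
  exact pow_ne_zero _ (C.hζ.ne_zero (by have := C.hd3; omega))

/-- The difference between a child of `v` and the critical point. -/
noncomputable def base (v : List (Fin d)) (i : Fin d) : AC :=
  C.ι (v ++ [i]) - algebraMap ℚ AC C.c₀

lemma base_ne_zero (v : List (Fin d)) (i : Fin d) : C.base v i ≠ 0 :=
  sub_ne_zero.mpr (C.hnc v i)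

lemma exists_ex (v : List (Fin d)) (i : Fin d) :
    ∃ x : ZMod d, C.base v i = C.zp x * C.base v 0 := by
  have h0 : C.base v 0 ≠ 0 := C.base_ne_zero v 0
  have hdd : C.base v i ^ d = C.base v 0 ^ d := C.hdth v i 0
  have hpow : (C.base v i / C.base v 0) ^ d = 1 := by
    rw [div_pow, hdd, div_self (pow_ne_zero _ h0)]
  obtain ⟨m, hm, hmeq⟩ := C.hζ.eq_pow_of_pow_eq_one hpow
  refine ⟨(m : ZMod d), ?_⟩
  rw [← C.zeta_pow_eq_zp, hmeq, div_mul_cancel₀ _ h0]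

/-- The exponent of the `i`-th child of `v` relative to the `0`-th child. -/
noncomputable def ex (v : List (Fin d)) (i : Fin d) : ZMod d :=
  (C.exists_ex v i).choose

lemma ex_spec (v : List (Fin d)) (i : Fin d) :
    C.base v i = C.zp (C.ex v i) * C.base v 0 :=
  (C.exists_ex v i).choose_spec

lemma ex_injective (v : List (Fin d)) : Function.Injective (C.ex v) := by
  intro i j h
  have h2 : C.base v i = C.base v j := by rw [C.ex_spec v i, C.ex_spec v j, h]
  have h3 : C.ι (v ++ [i]) = C.ι (v ++ [j]) := by
    have h2' : C.ι (v ++ [i]) - algebraMap ℚ AC C.c₀ = C.ι (v ++ [j]) - algebraMap ℚ AC C.c₀ := h2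
    exact sub_left_injective h2'
  have h4 := C.hinj _ _ (by simp) h3
  exact List.singleton_injective (List.append_cancel_left h4)

lemma ex_bijective (v : List (Fin d)) : Function.Bijective (C.ex v) := by
  have h1 : Fintype.card (Fin d) = Fintype.card (ZMod d) := by
    rw [Fintype.card_fin, ZMod.card]
  exact (Fintype.bijective_iff_injective_and_card _).mpr ⟨C.ex_injective v, h1⟩

/-- The identification of the children of `v` with `ZMod d`. -/
noncomputable def exEquiv (v : List (Fin d)) : Fin d ≃ ZMod d :=
  Equiv.ofBijective _ (C.ex_bijective v)

end Ctx

end GaloisContext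


section Character

/-- The coercion from `ℚ`-algebra automorphisms to ring automorphisms, as a monoid hom. -/
noncomputable def galToRing : GalQ →* (AC ≃+* AC) where
  toFun σ := σ.toRingEquiv
  map_one' := rfl
  map_mul' σ τ := rfl

namespace Ctx

variable {d : ℕ} [NeZero d] (C : Ctx d)

/-- The mod-`d` cyclotomic character of the absolute Galois group of `ℚ`. -/
noncomputable def U : GalQ →* (ZMod d)ˣ :=
  (modularCyclotomicCharacter AC C.hζ.card_rootsOfUnity).comp galToRing

lemma U_spec (σ : GalQ) : σ C.ζ = C.zp ((C.U σ : (ZMod d)ˣ) : ZMod d) := by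
  have h := modularCyclotomicCharacter.spec AC C.hζ.card_rootsOfUnity (galToRing σ)
    (t := (C.hζ.toRootsOfUnity : ACˣ)) (SetLike.coe_mem _)
  have hcoe : ((C.hζ.toRootsOfUnity : ACˣ) : AC) = C.ζ := C.hζ.val_toRootsOfUnity_coe
  rw [hcoe] at h
  exact h

lemma map_zp (σ : GalQ) (x : ZMod d) :
    σ (C.zp x) = C.zp (((C.U σ : (ZMod d)ˣ) : ZMod d) * x) := by
  have h1 : σ (C.zp x) = (σ C.ζ) ^ x.val := by rw [zp, map_pow]
  rw [h1, U_spec, ← zp_mul]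
lemma toPerm_eq_label (σ : GalQ) (v : List (Fin d)) (i : Fin d) :
    (C.ρ σ).toPerm (v ++ [i]) = ((C.ρ σ).toPerm v) ++ [TreeAut.label (C.ρ σ) v i] :=
  TreeAut.apply_concat _ v i

lemma base_image (σ : GalQ) (v : List (Fin d)) (i : Fin d) :
    C.base ((C.ρ σ).toPerm v) (TreeAut.label (C.ρ σ) v i) = σ (C.base v i) := by
  unfold base
  rw [map_sub, AlgEquiv.commutes, ← C.hρ σ (v ++ [i]), toPerm_eq_label]

/-- The key structural property: labels of Galois elements are affine maps. -/
lemma label_ex (σ : GalQ) (v : List (Fin d)) (i : Fin d) :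
    C.ex ((C.ρ σ).toPerm v) (TreeAut.label (C.ρ σ) v i)
      = ((C.U σ : (ZMod d)ˣ) : ZMod d) * C.ex v i
        + C.ex ((C.ρ σ).toPerm v) (TreeAut.label (C.ρ σ) v 0) := by
  set v' := (C.ρ σ).toPerm v with hv'
  set u := ((C.U σ : (ZMod d)ˣ) : ZMod d) with hu
  have h1 : C.base v' (TreeAut.label (C.ρ σ) v i) = σ (C.base v i) := C.base_image σ v i
  have h0 : C.base v' (TreeAut.label (C.ρ σ) v 0) = σ (C.base v 0) := C.base_image σ v 0
  rw [C.ex_spec v i, map_mul, C.map_zp, ← h0, C.ex_spec v' (TreeAut.label (C.ρ σ) v 0),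
    C.ex_spec v' (TreeAut.label (C.ρ σ) v i)] at h1
  have h2 : C.zp (C.ex v' (TreeAut.label (C.ρ σ) v i)) =
      C.zp (u * C.ex v i) * C.zp (C.ex v' (TreeAut.label (C.ρ σ) v 0)) :=
    mul_right_cancel₀ (C.base_ne_zero v' 0) (by rw [h1]; ring)
  rw [← C.zp_add] at h2
  exact C.zp_injective h2

lemma rho_fixes_nil (σ : GalQ) : (C.ρ σ).toPerm [] = [] := toPerm_nil _

/-- Galois elements whose cyclotomic character avoids `1` mod every prime divisor
of `d` fix a vertex at every level. -/
lemma exists_fixed (σ : GalQ) (hgood : IsUnit (((C.U σ : (ZMod d)ˣ) : ZMod d) - 1)) (n : ℕ) :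
    ∃ v : List (Fin d), v.length = n ∧ (C.ρ σ).toPerm v = v := by
  induction n with
  | zero => exact ⟨[], rfl, C.rho_fixes_nil σ⟩
  | succ m ih =>
    obtain ⟨v, hlen, hfix⟩ := ih
    obtain ⟨w, hwspec⟩ : ∃ w : ZMod d, (((C.U σ : (ZMod d)ˣ) : ZMod d) - 1) * w
        = -(C.ex v (TreeAut.label (C.ρ σ) v 0)) := by
      obtain ⟨U1, hU1⟩ := hgood
      refine ⟨(U1⁻¹ : (ZMod d)ˣ) * (-(C.ex v (TreeAut.label (C.ρ σ) v 0))), ?_⟩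
      rw [← mul_assoc, ← hU1, Units.mul_inv, one_mul]
    obtain ⟨i, hiw⟩ : ∃ i : Fin d, C.ex v i = w :=
      ⟨(C.exEquiv v).symm w, Equiv.apply_symm_apply (C.exEquiv v) w⟩
    have h := C.label_ex σ v i
    rw [hfix] at h
    have hkey : C.ex v (TreeAut.label (C.ρ σ) v i) = C.ex v i := by
      rw [h, hiw]
      have h2 : ((C.U σ : (ZMod d)ˣ) : ZMod d) * w
          = (((C.U σ : (ZMod d)ˣ) : ZMod d) - 1) * w + w := by ring
      rw [h2, hwspec]
      ring
    have hlab : TreeAut.label (C.ρ σ) v i = i := C.ex_injective v hkey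
    refine ⟨v ++ [i], by simp [hlen], ?_⟩
    rw [C.toPerm_eq_label, hfix, hlab]

/-- The value of the character is determined by the label at the root. -/
lemma U_eq_of_label_eq (σ τ : GalQ)
    (h : TreeAut.label (C.ρ σ) [] = TreeAut.label (C.ρ τ) []) : C.U σ = C.U τ := by
  have key : ∀ γ : GalQ, ∀ i : Fin d,
      C.ex [] (TreeAut.label (C.ρ γ) [] i)
        = ((C.U γ : (ZMod d)ˣ) : ZMod d) * C.ex [] i
          + C.ex [] (TreeAut.label (C.ρ γ) [] 0) := by
    intro γ i
    have := C.label_ex γ [] i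
    rwa [C.rho_fixes_nil γ] at this
  set i1 : Fin d := (C.exEquiv []).symm 1 with hi1
  have hex1 : C.ex [] i1 = 1 := by
    show C.exEquiv [] i1 = 1
    rw [hi1, Equiv.apply_symm_apply]
  set i0 : Fin d := (C.exEquiv []).symm 0 with hi0
  have hex0 : C.ex [] i0 = 0 := by
    show C.exEquiv [] i0 = 0
    rw [hi0, Equiv.apply_symm_apply]
  have hval : ∀ γ : GalQ, ((C.U γ : (ZMod d)ˣ) : ZMod d)
      = C.ex [] (TreeAut.label (C.ρ γ) [] i1) - C.ex [] (TreeAut.label (C.ρ γ) [] i0) := by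
    intro γ
    rw [key γ i1, key γ i0, hex1, hex0]
    ring
  apply Units.ext
  rw [hval σ, hval τ, h]

end Ctx

end Character


section Surjectivity

open IntermediateField Polynomial

namespace Ctx

variable {d : ℕ} [NeZero d] (C : Ctx d)

lemma zeta_integral : IsIntegral ℚ C.ζ :=
  ((AlgebraicClosure.isAlgebraic ℚ : Algebra.IsAlgebraic ℚ AC).isAlgebraic C.ζ).isIntegral

lemma exists_aut_pow (m : ℕ) (hm : Nat.Coprime m d) : ∃ σ : GalQ, σ C.ζ = C.ζ ^ m := by
  have hd0 : 0 < d := Nat.pos_of_ne_zero (NeZero.ne d)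
  have hint : IsIntegral ℚ C.ζ := C.zeta_integral
  have hprim : IsPrimitiveRoot (C.ζ ^ m) d := (C.hζ.pow_iff_coprime hd0 m).mpr hm
  -- the power is a root of the minimal polynomial of ζ
  have hmin : minpoly ℚ C.ζ = cyclotomic d ℚ := (cyclotomic_eq_minpoly_rat C.hζ hd0).symm
  have hroot : aeval (C.ζ ^ m) (minpoly ℚ C.ζ) = 0 := by
    rw [hmin, aeval_def, ← eval_map, map_cyclotomic]
    exact hprim.isRoot_cyclotomic hd0
  -- the element ζ^m inside ℚ⟮ζ⟯
  have hmem : C.ζ ^ m ∈ ℚ⟮C.ζ⟯ := pow_mem (mem_adjoin_simple_self ℚ C.ζ) m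
  set y : ℚ⟮C.ζ⟯ := ⟨C.ζ ^ m, hmem⟩ with hy
  have hroot' : aeval y (minpoly ℚ C.ζ) = 0 := by
    apply (algebraMap ℚ⟮C.ζ⟯ AC).injective
    rw [map_zero, ← aeval_algebraMap_apply]
    rw [show (algebraMap ℚ⟮C.ζ⟯ AC) y = C.ζ ^ m from rfl]
    exact hroot
  -- build the algebra endomorphism of ℚ⟮ζ⟯ sending the generator to y
  have := adjoin.finiteDimensional hint
  set φ : ℚ⟮C.ζ⟯ →ₐ[ℚ] ℚ⟮C.ζ⟯ :=
    (AdjoinRoot.liftAlgHom (minpoly ℚ C.ζ) (Algebra.ofId ℚ _) y (by rw [Algebra.toRingHom_ofId, ← aeval_def]; exact hroot')).comp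
      (adjoinRootEquivAdjoin ℚ hint).symm.toAlgHom with hφ
  have hφgen : φ (AdjoinSimple.gen ℚ C.ζ) = y := by
    rw [hφ]
    show (AdjoinRoot.liftAlgHom (minpoly ℚ C.ζ) (Algebra.ofId ℚ _) y
      (by rw [Algebra.toRingHom_ofId, ← aeval_def]; exact hroot'))
      ((adjoinRootEquivAdjoin ℚ hint).symm (AdjoinSimple.gen ℚ C.ζ)) = y
    rw [adjoinRootEquivAdjoin_symm_apply_gen, AdjoinRoot.liftAlgHom_root]
  set χ : ℚ⟮C.ζ⟯ ≃ₐ[ℚ] ℚ⟮C.ζ⟯ := AlgEquiv.ofBijective φ φ.bijective with hχ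
  haveI : IsAlgClosure ℚ AC := ⟨inferInstance, (AlgebraicClosure.isAlgebraic ℚ : Algebra.IsAlgebraic ℚ AC)⟩
  refine ⟨χ.liftNormal AC, ?_⟩
  have hcom := AlgEquiv.liftNormal_commutes χ AC (AdjoinSimple.gen ℚ C.ζ)
  rw [AdjoinSimple.algebraMap_gen] at hcom
  rw [hcom]
  show (algebraMap ℚ⟮C.ζ⟯ AC) (χ (AdjoinSimple.gen ℚ C.ζ)) = C.ζ ^ m
  have : χ (AdjoinSimple.gen ℚ C.ζ) = y := hφgen
  rw [this]
  rfl

lemma U_surjective : Function.Surjective C.U := by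
  intro a
  have hco : Nat.Coprime ((a : ZMod d)).val d := ZMod.val_coe_unit_coprime a
  obtain ⟨σ, hσ⟩ := C.exists_aut_pow ((a : ZMod d)).val hco
  refine ⟨σ, ?_⟩
  have h1 : σ C.ζ = C.zp ((C.U σ : (ZMod d)ˣ) : ZMod d) := C.U_spec σ
  have h2 : σ C.ζ = C.zp ((a : ZMod d)) := by
    rw [hσ, C.zeta_pow_eq_zp, ZMod.natCast_val, ZMod.cast_id]
  apply Units.ext
  exact C.zp_injective (h1.symm.trans h2)

end Ctx

end Surjectivity



@[to_additive ncard_preimage_addhom]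
lemma ncard_preimage_mulhom {G H : Type*} [Group G] [Group H] [Finite G] (f : G →* H)
    (S : Set H) :
    (f ⁻¹' S).ncard = (S ∩ Set.range f).ncard * (f ⁻¹' {1}).ncard := by
  classical
  cases nonempty_fintype G
  have hA : f ⁻¹' S = ↑(Finset.univ.filter (fun x => f x ∈ S)) := by ext x; simp
  have hK : f ⁻¹' {1} = ↑(Finset.univ.filter (fun x => f x = 1)) := by ext x; simp
  have hT : (S ∩ Set.range f) = ↑((Finset.univ.filter (fun x => f x ∈ S)).image f) := by
    ext h; constructor
    · rintro ⟨hS, g, rfl⟩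
      exact Finset.mem_coe.2 (Finset.mem_image.2 ⟨g, Finset.mem_filter.2 ⟨Finset.mem_univ _, hS⟩, rfl⟩)
    · intro hh
      obtain ⟨g, hg, rfl⟩ := Finset.mem_image.1 (Finset.mem_coe.1 hh)
      exact ⟨(Finset.mem_filter.1 hg).2, g, rfl⟩
  rw [hA, hK, hT, Set.ncard_coe_finset, Set.ncard_coe_finset, Set.ncard_coe_finset]
  rw [Finset.card_eq_sum_card_fiberwise
    (f := f) (t := (Finset.univ.filter (fun x => f x ∈ S)).image f)
    (fun x hx => Finset.mem_image.2 ⟨x, hx, rfl⟩)]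
  rw [Finset.sum_congr rfl (fun h hh => ?_), Finset.sum_const, smul_eq_mul]
  obtain ⟨g₀, hg₀A, hg₀⟩ := Finset.mem_image.1 hh
  have hS0 : f g₀ ∈ S := (Finset.mem_filter.1 hg₀A).2
  apply Finset.card_bij' (fun x _ => g₀⁻¹ * x) (fun y _ => g₀ * y)
  · intro x hx
    have hx2 : f x = h := (Finset.mem_filter.1 hx).2
    refine Finset.mem_filter.2 ⟨Finset.mem_univ _, ?_⟩
    rw [map_mul, map_inv, hx2, hg₀, inv_mul_cancel]
  · intro y hy
    have hy2 : f y = 1 := (Finset.mem_filter.1 hy).2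
    have h1 : f (g₀ * y) = h := by rw [map_mul, hy2, mul_one, hg₀]
    exact Finset.mem_filter.2 ⟨Finset.mem_filter.2 ⟨Finset.mem_univ _, h1.symm ▸ (hg₀ ▸ hS0)⟩, h1⟩
  · intro x _; group
  · intro y _; group


section ZModCounting

lemma prod_isUnit_iff {α β : Type*} [CommMonoid α] [CommMonoid β] (x : α × β) :
    IsUnit x ↔ IsUnit x.1 ∧ IsUnit x.2 := by
  constructor
  · intro h
    exact ⟨h.map (MonoidHom.fst α β), h.map (MonoidHom.snd α β)⟩
  · rintro ⟨h1, h2⟩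
    rw [isUnit_iff_exists_inv] at h1 h2 ⊢
    obtain ⟨b1, hb1⟩ := h1
    obtain ⟨b2, hb2⟩ := h2
    exact ⟨(b1, b2), Prod.ext hb1 hb2⟩

lemma ncard_sprod {α β : Type*} (s : Set α) (t : Set β) :
    (s ×ˢ t).ncard = s.ncard * t.ncard := by
  rw [← Nat.card_coe_set_eq, ← Nat.card_coe_set_eq, ← Nat.card_coe_set_eq,
    Nat.card_congr (Equiv.Set.prod s t), Nat.card_prod]

/-- The set of `x` mod `m` with `x` and `x - 1` both invertible. -/
def Mset (m : ℕ) : Set (ZMod m) := {x | IsUnit x ∧ IsUnit (x - 1)}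

lemma Mset_prime_pow_ncard {p n : ℕ} (hp : p.Prime) (hn : 0 < n) :
    (Mset (p ^ n)).ncard = (p - 2) * p ^ (n - 1) := by
  haveI : Fact p.Prime := ⟨hp⟩
  haveI : NeZero (p ^ n) := ⟨pow_ne_zero _ hp.ne_zero⟩
  have hπsurj : Function.Surjective (ZMod.castHom (dvd_pow_self p hn.ne') (ZMod p)) := by
    intro y
    obtain ⟨k, rfl⟩ := ZMod.natCast_zmod_surjective y
    exact ⟨(k : ZMod (p ^ n)), by rw [map_natCast]⟩
  have hunit : ∀ x : ZMod (p ^ n),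
      IsUnit x ↔ IsUnit (ZMod.castHom (dvd_pow_self p hn.ne') (ZMod p) x) := by
    intro x
    have hx : ((x.val : ℕ) : ZMod (p ^ n)) = x := by
      rw [ZMod.natCast_val, ZMod.cast_id]
    have hπx : ZMod.castHom (dvd_pow_self p hn.ne') (ZMod p) x = ((x.val : ℕ) : ZMod p) := by
      conv_lhs => rw [← hx]
      rw [map_natCast]
    rw [hπx, ← hx, ZMod.isUnit_iff_coprime, ZMod.isUnit_iff_coprime,
      Nat.coprime_pow_right_iff hn, ZMod.val_natCast, Nat.mod_eq_of_lt (ZMod.val_lt x)]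
  have hMeq : Mset (p ^ n)
      = ⇑(AddMonoidHom.mk' ⇑(ZMod.castHom (dvd_pow_self p hn.ne') (ZMod p))
          (map_add _)) ⁻¹' (Mset p) := by
    ext x
    show (IsUnit x ∧ IsUnit (x - 1)) ↔ (IsUnit (ZMod.castHom (dvd_pow_self p hn.ne') (ZMod p) x)
      ∧ IsUnit (ZMod.castHom (dvd_pow_self p hn.ne') (ZMod p) x - 1))
    have h2 : ZMod.castHom (dvd_pow_self p hn.ne') (ZMod p) x - 1
        = ZMod.castHom (dvd_pow_self p hn.ne') (ZMod p) (x - 1) := by rw [map_sub, map_one]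
    rw [h2, ← hunit x, ← hunit (x - 1)]
  have hrange : Set.range ⇑(AddMonoidHom.mk' ⇑(ZMod.castHom (dvd_pow_self p hn.ne') (ZMod p))
      (map_add _)) = Set.univ := Set.range_eq_univ.mpr hπsurj
  have hcount := ncard_preimage_addhom (AddMonoidHom.mk'
    ⇑(ZMod.castHom (dvd_pow_self p hn.ne') (ZMod p)) (map_add _)) (Mset p)
  have hcount2 := ncard_preimage_addhom (AddMonoidHom.mk'
    ⇑(ZMod.castHom (dvd_pow_self p hn.ne') (ZMod p)) (map_add _)) Set.univ
  rw [hrange, Set.inter_univ] at hcount hcount2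
  rw [Set.preimage_univ] at hcount2
  have huniv1 : (Set.univ : Set (ZMod (p ^ n))).ncard = p ^ n := by
    rw [Set.ncard_univ, Nat.card_zmod]
  have huniv2 : (Set.univ : Set (ZMod p)).ncard = p := by
    rw [Set.ncard_univ, Nat.card_zmod]
  have hMp : (Mset p).ncard = p - 2 := by
    have h1 : Mset p = Set.univ \ {0, 1} := by
      ext x
      show (IsUnit x ∧ IsUnit (x - 1)) ↔ _
      rw [isUnit_iff_ne_zero, isUnit_iff_ne_zero, sub_ne_zero]
      simp [and_comm]
    rw [h1, Set.ncard_diff (Set.subset_univ _), huniv2,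
      Set.ncard_pair (zero_ne_one (α := ZMod p))]
  rw [huniv1, huniv2] at hcount2
  have hpow : p ^ n = p * p ^ (n - 1) := by
    rw [← pow_succ', Nat.sub_add_cancel hn]
  have hK := Nat.eq_of_mul_eq_mul_left hp.pos (hcount2.symm.trans hpow)
  rw [hMeq, hcount, hMp, hK]

lemma Mset_mul_ncard {a b : ℕ} (hab : Nat.Coprime a b) :
    (Mset (a * b)).ncard = (Mset a).ncard * (Mset b).ncard := by
  have key : ∀ y : ZMod (a * b), IsUnit y ↔ IsUnit (ZMod.chineseRemainder hab y) := by
    intro y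
    constructor
    · intro h; exact h.map (ZMod.chineseRemainder hab).toRingHom
    · intro h
      have h2 := h.map (ZMod.chineseRemainder hab).symm.toRingHom
      rwa [show (ZMod.chineseRemainder hab).symm.toRingHom ((ZMod.chineseRemainder hab) y) = y
        from (ZMod.chineseRemainder hab).symm_apply_apply y] at h2
  have hMeq : Mset (a * b) = ⇑(ZMod.chineseRemainder hab) ⁻¹' ((Mset a) ×ˢ (Mset b)) := by
    ext x
    have h2 : (ZMod.chineseRemainder hab) (x - 1) = (ZMod.chineseRemainder hab) x - 1 := by
      rw [map_sub, map_one]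
    constructor
    · rintro ⟨u1, u2⟩
      have e1 := (key x).mp u1
      have e2 := (key _).mp u2
      rw [h2] at e2
      rw [prod_isUnit_iff] at e1 e2
      exact ⟨⟨e1.1, e2.1⟩, e1.2, e2.2⟩
    · rintro ⟨⟨f1, f2⟩, ⟨g1, g2⟩⟩
      refine ⟨(key x).mpr (prod_isUnit_iff _ |>.mpr ⟨f1, g1⟩), (key _).mpr ?_⟩
      rw [h2]
      exact prod_isUnit_iff _ |>.mpr ⟨f2, g2⟩
  have himg : ⇑(ZMod.chineseRemainder hab) ⁻¹' ((Mset a) ×ˢ (Mset b))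
      = ⇑(ZMod.chineseRemainder hab).symm '' ((Mset a) ×ˢ (Mset b)) := by
    ext z
    constructor
    · intro hz
      exact ⟨(ZMod.chineseRemainder hab) z, hz, (ZMod.chineseRemainder hab).symm_apply_apply z⟩
    · rintro ⟨y, hy, rfl⟩
      simp only [Set.mem_preimage, (ZMod.chineseRemainder hab).apply_symm_apply]
      exact hy
  rw [hMeq, himg, Set.ncard_image_of_injective _ ((ZMod.chineseRemainder hab).symm.injective),
    ncard_sprod]

/-- The key numerical identity. -/
lemma Mset_identity : ∀ m : ℕ,
    ((Mset m).ncard : ℝ) * ∏ p ∈ m.primeFactors, ((p : ℝ) - 1)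
      = (Nat.totient m : ℝ) * ∏ p ∈ m.primeFactors, ((p : ℝ) - 2) := by
  refine Nat.recOnPosPrimePosCoprime ?_ ?_ ?_ ?_
  · -- prime powers
    intro p n hp hn
    have hp' : p.Prime := hp
    rw [Mset_prime_pow_ncard hp' hn, Nat.totient_prime_pow hp' hn,
      Nat.primeFactors_prime_pow hn.ne' hp, Finset.prod_singleton, Finset.prod_singleton]
    have h2 : (2 : ℕ) ≤ p := hp'.two_le
    have h1 : (1 : ℕ) ≤ p := by omega
    push_cast [h2, h1]
    ring
  · -- zero
    have h0 : Mset 0 = ∅ := by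
      ext x
      show (IsUnit x ∧ IsUnit (x - 1)) ↔ False
      simp only [iff_false]
      rintro ⟨h1, h2⟩
      replace h1 := Int.isUnit_iff.mp h1
      replace h2 := Int.isUnit_iff.mp h2
      rcases h1 with rfl | rfl <;> omega
    rw [h0]
    simp
  · -- one
    have h1 : Mset 1 = Set.univ := by
      ext x
      simp only [Mset, Set.mem_setOf_eq, Set.mem_univ, iff_true]
      exact ⟨isUnit_of_subsingleton _, isUnit_of_subsingleton _⟩
    rw [h1]
    simp [Set.ncard_univ]
  · -- coprime multiplication
    intro a b ha hb hab IHa IHb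
    have ha0 : a ≠ 0 := by omega
    have hb0 : b ≠ 0 := by omega
    rw [Mset_mul_ncard hab, Nat.totient_mul hab, Nat.primeFactors_mul ha0 hb0,
      Finset.prod_union hab.disjoint_primeFactors,
      Finset.prod_union hab.disjoint_primeFactors]
    push_cast
    linear_combination (((Mset b).ncard : ℝ) * ∏ p ∈ b.primeFactors, ((p : ℝ) - 1)) * IHa
      + ((Nat.totient a : ℝ) * ∏ p ∈ a.primeFactors, ((p : ℝ) - 2)) * IHb

end ZModCounting


section CountCore

variable {G A B : Type*} [Group G] [Group A] [Group B] [Finite A] [Finite B]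

lemma prod_count (f : G →* A) (g : G →* B) (SB : Set B) :
    {x ∈ Set.range ⇑(f.prod g) | x.2 ∈ SB}.ncard * (Set.range ⇑g).ncard
      = (SB ∩ Set.range ⇑g).ncard * (Set.range ⇑(f.prod g)).ncard := by
  classical
  have hrange2 : Set.range ⇑((MonoidHom.snd A B).comp (f.prod g).range.subtype)
      = Set.range ⇑g := by
    ext b; constructor
    · rintro ⟨⟨x, hx⟩, rfl⟩
      obtain ⟨σ, rfl⟩ := MonoidHom.mem_range.mp hx
      exact ⟨σ, rfl⟩
    · rintro ⟨σ, rfl⟩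
      exact ⟨⟨(f.prod g) σ, MonoidHom.mem_range.mpr ⟨σ, rfl⟩⟩, rfl⟩
  have he1 : Subtype.val '' (⇑((MonoidHom.snd A B).comp (f.prod g).range.subtype) ⁻¹' SB)
      = {x ∈ Set.range ⇑(f.prod g) | x.2 ∈ SB} := by
    ext x; constructor
    · rintro ⟨⟨y, hy⟩, hyS, rfl⟩
      exact ⟨MonoidHom.mem_range.mp hy, hyS⟩
    · rintro ⟨hx, hxS⟩
      exact ⟨⟨x, MonoidHom.mem_range.mpr hx⟩, hxS, rfl⟩
  have he2 : Subtype.val '' (Set.univ : Set ↥(f.prod g).range) = Set.range ⇑(f.prod g) := by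
    rw [Set.image_univ, Subtype.range_coe_subtype]
    ext x
    exact MonoidHom.mem_range
  have hc1 := ncard_preimage_mulhom ((MonoidHom.snd A B).comp (f.prod g).range.subtype) SB
  have hc2 := ncard_preimage_mulhom ((MonoidHom.snd A B).comp (f.prod g).range.subtype)
    Set.univ
  rw [Set.preimage_univ, Set.univ_inter] at hc2
  rw [hrange2] at hc1 hc2
  have k1 : {x ∈ Set.range ⇑(f.prod g) | x.2 ∈ SB}.ncard
      = (⇑((MonoidHom.snd A B).comp (f.prod g).range.subtype) ⁻¹' SB).ncard := by
    rw [← he1, Set.ncard_image_of_injective _ Subtype.val_injective]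
  have k2 : (Set.range ⇑(f.prod g)).ncard = (Set.univ : Set ↥(f.prod g).range).ncard := by
    rw [← he2, Set.ncard_image_of_injective _ Subtype.val_injective]
  rw [k1, k2, hc1, hc2]
  ring

lemma fst_count (f : G →* A) (g : G →* B)
    (hdet : ∀ σ τ : G, f σ = f τ → g σ = g τ) (SA : Set A) :
    {x ∈ Set.range ⇑(f.prod g) | x.1 ∈ SA}.ncard = {p ∈ Set.range ⇑f | p ∈ SA}.ncard := by
  have hinj : Set.InjOn Prod.fst (Set.range ⇑(f.prod g)) := by
    rintro x ⟨σ, rfl⟩ y ⟨τ, rfl⟩ hxy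
    have h1 : f σ = f τ := hxy
    have h2 := hdet σ τ h1
    exact Prod.ext h1 h2
  have himg : Prod.fst '' {x ∈ Set.range ⇑(f.prod g) | x.1 ∈ SA}
      = {p ∈ Set.range ⇑f | p ∈ SA} := by
    ext p; constructor
    · rintro ⟨x, ⟨⟨σ, rfl⟩, hS⟩, rfl⟩
      exact ⟨⟨σ, rfl⟩, hS⟩
    · rintro ⟨⟨σ, rfl⟩, hS⟩
      exact ⟨(f.prod g) σ, ⟨⟨σ, rfl⟩, hS⟩, rfl⟩
  rw [← himg, Set.ncard_image_of_injOn (hinj.mono (fun x hx => hx.1))]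

lemma range_count (f : G →* A) (g : G →* B)
    (hdet : ∀ σ τ : G, f σ = f τ → g σ = g τ) :
    (Set.range ⇑(f.prod g)).ncard = (Set.range ⇑f).ncard := by
  have h1 := fst_count f g hdet Set.univ
  simpa only [Set.mem_univ, Set.sep_true] using h1

lemma div_ineq {a b c e : ℕ} (hb : 0 < b) (he : 0 < e) (h : a * e ≤ c * b) :
    (a : ℝ) / b ≤ (c : ℝ) / e := by
  rw [div_le_div_iff₀ (by exact_mod_cast hb) (by exact_mod_cast he)]
  exact_mod_cast h

end CountCore

section CtxCounting

namespace Ctx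

variable {d : ℕ} [NeZero d] (C : Ctx d)

lemma rho_one : C.ρ 1 = 1 := by
  apply TreeAut.toPerm_injective
  apply Equiv.ext
  intro v
  exact C.hinj _ _ ((C.ρ 1).length_eq v) (C.hρ 1 v)

lemma rho_mul (σ τ : GalQ) : C.ρ (σ * τ) = C.ρ τ * C.ρ σ := by
  apply TreeAut.toPerm_injective
  apply Equiv.ext
  intro v
  have hlen : ((C.ρ (σ * τ)).toPerm v).length
      = ((C.ρ τ * C.ρ σ).toPerm v).length := by
    rw [(C.ρ (σ * τ)).length_eq]
    show _ = ((C.ρ σ).toPerm ((C.ρ τ).toPerm v)).length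
    rw [(C.ρ σ).length_eq, (C.ρ τ).length_eq]
  apply C.hinj _ _ hlen
  rw [C.hρ]
  show (σ * τ) (C.ι v) = C.ι ((C.ρ σ).toPerm ((C.ρ τ).toPerm v))
  rw [C.hρ, C.hρ]
  rfl

/-- The action of the Galois group on the `n`-th level, as a monoid hom. -/
noncomputable def Φ (n : ℕ) : GalQ →* Equiv.Perm (Lev d n) where
  toFun σ := permAt n (C.ρ σ)
  map_one' := by
    show permAt n (C.ρ 1) = 1
    rw [C.rho_one, permAt_one]
  map_mul' σ τ := by
    show permAt n (C.ρ (σ * τ)) = permAt n (C.ρ σ) * permAt n (C.ρ τ)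
    rw [C.rho_mul, permAt_mul]

lemma Φ_det {n : ℕ} (hn : 1 ≤ n) (σ τ : GalQ) (h : C.Φ n σ = C.Φ n τ) : C.U σ = C.U τ :=
  C.U_eq_of_label_eq σ τ (label_nil_eq_of_permAt_eq hn h)

lemma Φ_det_succ {n : ℕ} (σ τ : GalQ) (h : C.Φ (n + 1) σ = C.Φ (n + 1) τ) :
    C.Φ n σ = C.Φ n τ :=
  permAt_eq_of_succ h

lemma levelImage_eq (n : ℕ) :
    levelImage n (Set.range C.ρ)
      = (fun p : Equiv.Perm (Lev d n) => ⇑p) '' (Set.range ⇑(C.Φ n)) := by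
  show lmap n '' (Set.range C.ρ) = _
  have h1 : (lmap n ∘ C.ρ) = (fun p : Equiv.Perm (Lev d n) => ⇑p) ∘ ⇑(C.Φ n) :=
    funext fun σ => lmap_eq_permAt n (C.ρ σ)
  rw [← Set.range_comp, h1, Set.range_comp]

lemma fixRatio_eq (n : ℕ) :
    fixRatio (Set.range C.ρ) n
      = ({p ∈ Set.range ⇑(C.Φ n) | ∃ v, p v = v}.ncard : ℝ)
        / ((Set.range ⇑(C.Φ n)).ncard : ℝ) := by
  have hinj : Function.Injective (fun p : Equiv.Perm (Lev d n) => ⇑p) :=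
    fun p q h => Equiv.coe_fn_injective h
  have hfix : {q ∈ levelImage n (Set.range C.ρ) | ∃ v, q v = v}
      = (fun p : Equiv.Perm (Lev d n) => ⇑p) '' {p ∈ Set.range ⇑(C.Φ n) | ∃ v, p v = v} := by
    rw [levelImage_eq]
    ext q
    constructor
    · rintro ⟨⟨p, hp, rfl⟩, v, hv⟩
      exact ⟨p, ⟨hp, v, hv⟩, rfl⟩
    · rintro ⟨p, ⟨hp, v, hv⟩, rfl⟩
      exact ⟨⟨p, hp, rfl⟩, v, hv⟩
  unfold fixRatio
  rw [hfix, levelImage_eq, Set.ncard_image_of_injective _ hinj,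
    Set.ncard_image_of_injective _ hinj]

lemma main_bound {n : ℕ} (hn : 1 ≤ n) :
    ((Mset d).ncard : ℝ) / (Nat.totient d : ℝ) ≤ fixRatio (Set.range C.ρ) n := by
  classical
  set f := C.Φ n
  set g := C.U
  set SA : Set (Equiv.Perm (Lev d n)) := {p | ∃ v, p v = v} with hSA
  set SB : Set (ZMod d)ˣ := {a | IsUnit ((a : ZMod d) - 1)} with hSB
  have hdet : ∀ σ τ : GalQ, f σ = f τ → g σ = g τ := fun σ τ h => C.Φ_det hn σ τ h
  have hincl : {x ∈ Set.range ⇑(f.prod g) | x.2 ∈ SB}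
      ⊆ {x ∈ Set.range ⇑(f.prod g) | x.1 ∈ SA} := by
    rintro x ⟨⟨σ, rfl⟩, hgood⟩
    refine ⟨⟨σ, rfl⟩, ?_⟩
    obtain ⟨l, hl, hfixl⟩ := C.exists_fixed σ hgood n
    exact ⟨⟨l, hl⟩, Subtype.ext hfixl⟩
  have hnum : {x ∈ Set.range ⇑(f.prod g) | x.2 ∈ SB}.ncard
      ≤ {x ∈ Set.range ⇑(f.prod g) | x.1 ∈ SA}.ncard :=
    Set.ncard_le_ncard hincl (Set.toFinite _)
  have eq1 := prod_count f g SB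
  have eq2 := fst_count f g hdet SA
  have eqR := range_count f g hdet
  have hgsurj : Set.range ⇑g = Set.univ := C.U_surjective.range_eq
  have hSBcap : SB ∩ Set.range ⇑g = SB := by rw [hgsurj, Set.inter_univ]
  have htot : (Set.range ⇑g).ncard = Nat.totient d := by
    rw [hgsurj, Set.ncard_univ, Nat.card_eq_fintype_card, ZMod.card_units_eq_totient]
  have hSBcard : SB.ncard = (Mset d).ncard := by
    have himg : (fun u : (ZMod d)ˣ => (u : ZMod d)) '' SB = Mset d := by
      ext x
      constructor
      · rintro ⟨u, hu, rfl⟩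
        exact ⟨u.isUnit, hu⟩
      · rintro ⟨hx, hx1⟩
        exact ⟨hx.unit, by rwa [hSB, Set.mem_setOf_eq, IsUnit.unit_spec], IsUnit.unit_spec hx⟩
    rw [← himg, Set.ncard_image_of_injective _ Units.val_injective]
  -- cross multiplication inequality
  have hcross : (Mset d).ncard * (Set.range ⇑f).ncard
      ≤ {p ∈ Set.range ⇑f | p ∈ SA}.ncard * Nat.totient d := by
    calc (Mset d).ncard * (Set.range ⇑f).ncard
        = (SB ∩ Set.range ⇑g).ncard * (Set.range ⇑(f.prod g)).ncard := by
          rw [hSBcap, hSBcard, eqR]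
      _ = {x ∈ Set.range ⇑(f.prod g) | x.2 ∈ SB}.ncard * (Set.range ⇑g).ncard := eq1.symm
      _ ≤ {x ∈ Set.range ⇑(f.prod g) | x.1 ∈ SA}.ncard * (Set.range ⇑g).ncard :=
          Nat.mul_le_mul_right _ hnum
      _ = {p ∈ Set.range ⇑f | p ∈ SA}.ncard * Nat.totient d := by rw [eq2, htot]
  have htotpos : 0 < Nat.totient d := Nat.totient_pos.mpr (Nat.pos_of_ne_zero (NeZero.ne d))
  have hfpos : 0 < (Set.range ⇑f).ncard :=
    (Set.ncard_pos (Set.toFinite _)).mpr ⟨f 1, 1, rfl⟩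
  rw [C.fixRatio_eq n]
  exact div_ineq htotpos hfpos hcross

lemma fixRatio_antitone : Antitone (fixRatio (Set.range C.ρ)) := by
  apply antitone_nat_of_succ_le
  intro n
  classical
  set f := C.Φ (n + 1)
  set g := C.Φ n
  set SA : Set (Equiv.Perm (Lev d (n + 1))) := {p | ∃ v, p v = v} with hSA
  set SB : Set (Equiv.Perm (Lev d n)) := {p | ∃ v, p v = v} with hSB
  have hdet : ∀ σ τ : GalQ, f σ = f τ → g σ = g τ := fun σ τ h => C.Φ_det_succ σ τ h
  have hincl : {x ∈ Set.range ⇑(f.prod g) | x.1 ∈ SA}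
      ⊆ {x ∈ Set.range ⇑(f.prod g) | x.2 ∈ SB} := by
    rintro x ⟨⟨σ, rfl⟩, ⟨v, hv⟩⟩
    refine ⟨⟨σ, rfl⟩, ?_⟩
    have hfixtop : (C.ρ σ).toPerm v.1 = v.1 := congrArg Subtype.val hv
    have htake : (C.ρ σ).toPerm (v.1.take n) = v.1.take n := by
      rw [toPerm_take _ _ n (by rw [v.2]; omega), hfixtop]
    refine ⟨⟨v.1.take n, by rw [List.length_take, v.2]; omega⟩, Subtype.ext htake⟩
  have hnum : {x ∈ Set.range ⇑(f.prod g) | x.1 ∈ SA}.ncard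
      ≤ {x ∈ Set.range ⇑(f.prod g) | x.2 ∈ SB}.ncard :=
    Set.ncard_le_ncard hincl (Set.toFinite _)
  have eq1 := prod_count f g SB
  have eq2 := fst_count f g hdet SA
  have eqR := range_count f g hdet
  have hSBcap : SB ∩ Set.range ⇑g = {p ∈ Set.range ⇑g | p ∈ SB} := by
    ext p; exact ⟨fun h => ⟨h.2, h.1⟩, fun h => ⟨h.2, h.1⟩⟩
  have hcross : {p ∈ Set.range ⇑f | p ∈ SA}.ncard * (Set.range ⇑g).ncard
      ≤ {p ∈ Set.range ⇑g | p ∈ SB}.ncard * (Set.range ⇑f).ncard := by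
    calc {p ∈ Set.range ⇑f | p ∈ SA}.ncard * (Set.range ⇑g).ncard
        = {x ∈ Set.range ⇑(f.prod g) | x.1 ∈ SA}.ncard * (Set.range ⇑g).ncard := by rw [eq2]
      _ ≤ {x ∈ Set.range ⇑(f.prod g) | x.2 ∈ SB}.ncard * (Set.range ⇑g).ncard :=
          Nat.mul_le_mul_right _ hnum
      _ = (SB ∩ Set.range ⇑g).ncard * (Set.range ⇑(f.prod g)).ncard := eq1
      _ = {p ∈ Set.range ⇑g | p ∈ SB}.ncard * (Set.range ⇑f).ncard := by rw [hSBcap, eqR]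
  have hgpos : 0 < (Set.range ⇑g).ncard :=
    (Set.ncard_pos (Set.toFinite _)).mpr ⟨g 1, 1, rfl⟩
  have hfpos : 0 < (Set.range ⇑f).ncard :=
    (Set.ncard_pos (Set.toFinite _)).mpr ⟨f 1, 1, rfl⟩
  rw [C.fixRatio_eq n, C.fixRatio_eq (n + 1)]
  exact div_ineq hfpos hgpos hcross

lemma fpp_ge : ((Mset d).ncard : ℝ) / (Nat.totient d : ℝ) ≤ FPP (Set.range C.ρ) := by
  have hanti := C.fixRatio_antitone
  have hbdd : BddBelow (Set.range (fixRatio (Set.range C.ρ))) := by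
    refine ⟨0, ?_⟩
    rintro x ⟨n, rfl⟩
    rw [C.fixRatio_eq n]
    positivity
  have htend := tendsto_atTop_ciInf hanti hbdd
  have hlim : FPP (Set.range C.ρ) = ⨅ n, fixRatio (Set.range C.ρ) n := htend.limUnder_eq
  rw [hlim]
  apply le_ciInf
  intro n
  match n with
  | 0 => exact le_trans (C.main_bound (le_refl 1)) (hanti (by omega : 0 ≤ 1))
  | (m + 1) => exact C.main_bound (by omega)

end Ctx

end CtxCounting


/-- Let `f ∈ ℚ[z]` be a unicritical polynomial of odd degree `d ≥ 3`
and let `α ∈ ℚ` be a point that is not strictly post-critical for `f`.  Then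
`FPP(G_∞(ℚ,f,α)) ≥ ∏_{p prime, p ∣ d} (p−2)/(p−1) > 0`.

(Here `α` strictly post-critical means `α ∈ ∪_{n≥1} f^n(C_f)`, where `C_f` is the set of
critical points of `f`, i.e. the roots of `f'` in `ℚ̄`.  The preimage tree
`T_α = ⊔_n f^{-n}(α) ⊆ ℚ̄` is then `d`-adic; it is encoded by `ια` and `ρα` is the
arboreal representation of `Gal(ℚ̄/ℚ)` on it, so that `G_∞(ℚ,f,α)` is `Set.range ρα`.) -/
theorem unicritical_specialization_FPP_positive
    (P : Polynomial ℚ) (d : ℕ) (hd3 : 3 ≤ d) (hodd : Odd d) (hdeg : P.natDegree = d)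
    -- `f` is unicritical:
    (hunicrit : ∃ (k c₀ : ℚ), k ≠ 0 ∧
      Polynomial.derivative P = Polynomial.C k * (Polynomial.X - Polynomial.C c₀) ^ (d - 1))
    (α : ℚ)
    -- `α` is not strictly post-critical: `α ∉ ∪_{n≥1} f^n(C_f)`:
    (hnotspc : ¬ ∃ (n : ℕ) (c : AlgebraicClosure ℚ), 1 ≤ n ∧
      Polynomial.aeval c (Polynomial.derivative P) = 0 ∧
      (fun x : AlgebraicClosure ℚ => Polynomial.aeval x P)^[n] c
        = algebraMap ℚ (AlgebraicClosure ℚ) α)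
    -- the preimage tree `T_α = ⊔_n f^{-n}(α)`, which is `d`-adic:
    (ια : List (Fin d) → AlgebraicClosure ℚ)
    (hαroot : ια [] = algebraMap ℚ (AlgebraicClosure ℚ) α)
    (hαchild : ∀ (v : List (Fin d)) (i : Fin d), Polynomial.aeval (ια (v ++ [i])) P = ια v)
    (hαinj : ∀ v w : List (Fin d), v.length = w.length → ια v = ια w → v = w)
    (hαsurj : ∀ (v : List (Fin d)) (y : AlgebraicClosure ℚ),
      Polynomial.aeval y P = ια v → ∃ i : Fin d, y = ια (v ++ [i]))
    -- the arboreal Galois representation of `Gal(ℚ̄/ℚ)` on `T_α`: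
    (ρα : (AlgebraicClosure ℚ ≃ₐ[ℚ] AlgebraicClosure ℚ) → TreeAut d)
    (hρα : ∀ σ (v : List (Fin d)), ια ((ρα σ).toPerm v) = σ (ια v)) :
    FPP (Set.range ρα) ≥ ∏ p ∈ d.primeFactors, (((p : ℝ) - 2) / ((p : ℝ) - 1)) ∧
    (0 : ℝ) < ∏ p ∈ d.primeFactors, (((p : ℝ) - 2) / ((p : ℝ) - 1)) := by
  classical
  haveI : NeZero d := ⟨by omega⟩
  obtain ⟨k, c₀q, hk, hder⟩ := hunicrit
  have hd0 : (d : ℚ) ≠ 0 := Nat.cast_ne_zero.mpr (by omega)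
  haveI : NeZero ((d : AlgebraicClosure ℚ)) := ⟨Nat.cast_ne_zero.mpr (by omega)⟩
  obtain ⟨ζ, hζ⟩ := HasEnoughRootsOfUnity.exists_primitiveRoot (AlgebraicClosure ℚ) d
  -- normal form of the polynomial
  have hQder : Polynomial.derivative
      (P - Polynomial.C (k / (d : ℚ)) * (Polynomial.X - Polynomial.C c₀q) ^ d) = 0 := by
    rw [Polynomial.derivative_sub, hder, Polynomial.derivative_C_mul, Polynomial.derivative_pow,
      Polynomial.derivative_X_sub_C, mul_one, sub_eq_zero, ← mul_assoc, ← Polynomial.C_mul,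
      div_mul_cancel₀ k hd0]
  have hPform := Polynomial.eq_C_of_derivative_eq_zero hQder
  have hP : P = Polynomial.C (k / (d : ℚ)) * (Polynomial.X - Polynomial.C c₀q) ^ d
      + Polynomial.C ((P - Polynomial.C (k / (d : ℚ))
        * (Polynomial.X - Polynomial.C c₀q) ^ d).coeff 0) := by
    conv_lhs => rw [← sub_add_cancel P
      (Polynomial.C (k / (d : ℚ)) * (Polynomial.X - Polynomial.C c₀q) ^ d), hPform]
    ring
  have heval : ∀ x : AlgebraicClosure ℚ, Polynomial.aeval x P
      = algebraMap ℚ _ (k / (d : ℚ)) * (x - algebraMap ℚ _ c₀q) ^ d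
        + algebraMap ℚ _ ((P - Polynomial.C (k / (d : ℚ))
          * (Polynomial.X - Polynomial.C c₀q) ^ d).coeff 0) := by
    intro x
    conv_lhs => rw [hP]
    simp only [map_add, map_mul, map_pow, map_sub, Polynomial.aeval_X, Polynomial.aeval_C]
  -- iteration of base points
  have hIter : ∀ v : List (Fin d),
      (fun x : AlgebraicClosure ℚ => Polynomial.aeval x P)^[v.length] (ια v)
        = algebraMap ℚ _ α := by
    intro v
    induction v using List.reverseRecOn with
    | nil => simpa using hαroot
    | append_singleton l i ih =>
      rw [List.length_append, List.length_singleton, Function.iterate_succ_apply]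
      show (fun x : AlgebraicClosure ℚ => Polynomial.aeval x P)^[l.length]
        (Polynomial.aeval (ια (l ++ [i])) P) = _
      rw [hαchild l i]
      exact ih
  have hcrit : Polynomial.aeval ((algebraMap ℚ (AlgebraicClosure ℚ)) c₀q)
      (Polynomial.derivative P) = 0 := by
    rw [hder]
    simp only [map_mul, map_pow, map_sub, Polynomial.aeval_X, Polynomial.aeval_C]
    rw [sub_self, zero_pow (by omega : d - 1 ≠ 0), mul_zero]
  have hnc : ∀ (v : List (Fin d)) (i : Fin d),
      ια (v ++ [i]) ≠ algebraMap ℚ (AlgebraicClosure ℚ) c₀q := by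
    intro v i heq
    apply hnotspc
    refine ⟨v.length + 1, algebraMap ℚ _ c₀q, by omega, hcrit, ?_⟩
    have h2 := hIter (v ++ [i])
    rwa [List.length_append, List.length_singleton, heq] at h2
  have hdth : ∀ (v : List (Fin d)) (i j : Fin d),
      (ια (v ++ [i]) - algebraMap ℚ (AlgebraicClosure ℚ) c₀q) ^ d
        = (ια (v ++ [j]) - algebraMap ℚ (AlgebraicClosure ℚ) c₀q) ^ d := by
    intro v i j
    have h1 := hαchild v i
    have h2 := hαchild v j
    rw [heval] at h1 h2
    have h3 := add_right_cancel (h1.trans h2.symm)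
    have hne : (algebraMap ℚ (AlgebraicClosure ℚ)) (k / (d : ℚ)) ≠ 0 := by
      intro h
      exact (div_ne_zero hk hd0) ((algebraMap ℚ (AlgebraicClosure ℚ)).injective
        (by rw [h, map_zero]))
    exact mul_left_cancel₀ hne h3
  let C : Ctx d := ⟨hd3, ια, ζ, hζ, c₀q, ρα, hρα, hαinj, hnc, hdth⟩
  -- positivity of the product
  have hpos : (0 : ℝ) < ∏ p ∈ d.primeFactors, (((p : ℝ) - 2) / ((p : ℝ) - 1)) := by
    apply Finset.prod_pos
    intro p hp
    have hpp := Nat.prime_of_mem_primeFactors hp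
    have hdvd := Nat.dvd_of_mem_primeFactors hp
    have hp2 : p ≠ 2 := by
      intro h
      subst h
      rw [Nat.odd_iff] at hodd
      obtain ⟨c, rfl⟩ := hdvd
      omega
    have hp3 : 3 ≤ p := by have := hpp.two_le; omega
    have hp3' : (3 : ℝ) ≤ (p : ℝ) := by exact_mod_cast hp3
    exact div_pos (by linarith) (by linarith)
  refine ⟨?_, hpos⟩
  have h1 := C.fpp_ge
  have h2 : ((Mset d).ncard : ℝ) / (Nat.totient d : ℝ)
      = ∏ p ∈ d.primeFactors, (((p : ℝ) - 2) / ((p : ℝ) - 1)) := by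
    have hid := Mset_identity d
    rw [Finset.prod_div_distrib]
    have hP1pos : (0 : ℝ) < ∏ p ∈ d.primeFactors, ((p : ℝ) - 1) := by
      apply Finset.prod_pos
      intro p hp
      have h2le := (Nat.prime_of_mem_primeFactors hp).two_le
      have : (2 : ℝ) ≤ (p : ℝ) := by exact_mod_cast h2le
      linarith
    have htpos : (0 : ℝ) < (Nat.totient d : ℝ) := by
      exact_mod_cast Nat.totient_pos.mpr (by omega : 0 < d)
    rw [div_eq_div_iff htpos.ne' hP1pos.ne']
    linear_combination hid
  rw [ge_iff_le, ← h2]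
  exact h1


end ArboGal
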